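/- For the metric ds² = 2 du dv + √(u v^{-3}) dv² + v² e^{g(x,y)}(dx² + dy²) on the coordinate domain 0 < u, v < ∞, x, y ∈ ℝ, the vector field l with components l^a = (1,0,0,0) (i.e., l = ∂/∂u) is null and recurrent: l_{a;b} = l_a p_b for some 1-form p. -/

import Mathlib

open scoped BigOperators

/-- Partial derivative in the `i`-th coordinate direction of a function on ℝ⁴. -/
noncomputable def pd (i : Fin 4) (f : (Fin 4 → ℝ) → ℝ) (q : Fin 4 → ℝ) : ℝ :=
  fderiv ℝ f q (Pi.single i 1)

/-- Christoffel symbols `Γ^a_{bc}` of the Levi-Civita connection of the metric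
field `g`. -/
noncomputable def christoffel (g : (Fin 4 → ℝ) → Matrix (Fin 4) (Fin 4) ℝ)
    (a b c : Fin 4) (q : Fin 4 → ℝ) : ℝ :=
  (1 / 2) * ∑ d, (g q)⁻¹ a d *
    (pd b (fun r => g r d c) q + pd c (fun r => g r d b) q - pd d (fun r => g r b c) q)

/-- Covariant derivative `ω_{a;b}` of a covector field `ω`. -/
noncomputable def covD1 (g : (Fin 4 → ℝ) → Matrix (Fin 4) (Fin 4) ℝ)
    (ω : Fin 4 → (Fin 4 → ℝ) → ℝ) (a b : Fin 4) (q : Fin 4 → ℝ) : ℝ :=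
  pd b (ω a) q - ∑ c, christoffel g c a b q * ω c q

/-- Covariant derivative `T_{ab;c}` of a (0,2) tensor field `T`. -/
noncomputable def covD2 (g : (Fin 4 → ℝ) → Matrix (Fin 4) (Fin 4) ℝ)
    (T : Fin 4 → Fin 4 → (Fin 4 → ℝ) → ℝ) (a b c : Fin 4) (q : Fin 4 → ℝ) : ℝ :=
  pd c (T a b) q - ∑ d, christoffel g d a c q * T d b q
    - ∑ d, christoffel g d b c q * T a d q

/-- The metric `ds² = 2 du dv + √(u v⁻³) dv² + v² e^{g(x,y)} (dx² + dy²)` in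
coordinates `(x¹,x²,x³,x⁴) = (u,v,x,y) = (q 0, q 1, q 2, q 3)`. -/
noncomputable def gmet (gf : ℝ → ℝ → ℝ) (q : Fin 4 → ℝ) :
    Matrix (Fin 4) (Fin 4) ℝ :=
  !![0, 1, 0, 0;
     1, Real.sqrt (q 0 / (q 1) ^ 3), 0, 0;
     0, 0, (q 1) ^ 2 * Real.exp (gf (q 2) (q 3)), 0;
     0, 0, 0, (q 1) ^ 2 * Real.exp (gf (q 2) (q 3))]

/-- The vector field `l = ∂/∂u`, with components `l^a = (1,0,0,0)`. -/
def lvec : Fin 4 → ℝ := ![1, 0, 0, 0]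

/-- The lowered covector field `l_a = g_{ab} l^b` associated to `l = ∂/∂u`. -/
noncomputable def llow (gf : ℝ → ℝ → ℝ) (a : Fin 4) (q : Fin 4 → ℝ) : ℝ :=
  ∑ b, gmet gf q a b * lvec b

/- ### Auxiliary lemmas -/

lemma pd_const (c : ℝ) (i : Fin 4) (q : Fin 4 → ℝ) : pd i (fun _ => c) q = 0 := by
  simp [pd]

lemma pd_congr_zero {f g : (Fin 4 → ℝ) → ℝ} (h : ∀ r, f r = g r) (i : Fin 4)
    (q : Fin 4 → ℝ) (hg : pd i g q = 0) : pd i f q = 0 := by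
  rw [show f = g from funext h]; exact hg

lemma pd_zero_of_indep (f : (Fin 4 → ℝ) → ℝ) (i : Fin 4) (q : Fin 4 → ℝ)
    (hf : DifferentiableAt ℝ f q)
    (hind : ∀ t : ℝ, f (q + t • (Pi.single i 1 : Fin 4 → ℝ)) = f q) :
    pd i f q = 0 := by
  have hγ : HasDerivAt (fun t : ℝ => q + t • (Pi.single i 1 : Fin 4 → ℝ))
      (Pi.single i 1 : Fin 4 → ℝ) (0:ℝ) := by
    simpa using ((hasDerivAt_id (0:ℝ)).smul_const (Pi.single i 1 : Fin 4 → ℝ)).const_add q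
  have h1 : HasDerivAt (fun t : ℝ => f (q + t • (Pi.single i 1 : Fin 4 → ℝ)))
      (fderiv ℝ f q (Pi.single i 1)) 0 := by
    have hq : q + (0:ℝ) • (Pi.single i 1 : Fin 4 → ℝ) = q := by simp
    have hf' : HasFDerivAt f (fderiv ℝ f q) (q + (0:ℝ) • (Pi.single i 1 : Fin 4 → ℝ)) := by
      rw [hq]; exact hf.hasFDerivAt
    have h2 := hf'.comp_hasDerivAt (0:ℝ) hγ
    exact h2
  have h3 : HasDerivAt (fun t : ℝ => f (q + t • (Pi.single i 1 : Fin 4 → ℝ))) 0 0 := by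
    have : (fun t : ℝ => f (q + t • (Pi.single i 1 : Fin 4 → ℝ))) = fun _ => f q := by
      funext t; exact hind t
    rw [this]; exact hasDerivAt_const _ _
  have := h1.unique h3
  simpa [pd] using this

lemma pdF_zero (gf : ℝ → ℝ → ℝ) (hgf : ContDiff ℝ (⊤ : ℕ∞) (fun p : ℝ × ℝ => gf p.1 p.2))
    (q : Fin 4 → ℝ) :
    pd 0 (fun r : Fin 4 → ℝ => (r 1) ^ 2 * Real.exp (gf (r 2) (r 3))) q = 0 := by
  apply pd_zero_of_indep
  · apply DifferentiableAt.mul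
    · exact ((ContinuousLinearMap.proj (R := ℝ) (φ := fun _ : Fin 4 => ℝ)
        1).differentiable.differentiableAt).pow 2
    · have h1 : DifferentiableAt ℝ (fun p : ℝ × ℝ => Real.exp (gf p.1 p.2)) (q 2, q 3) :=
        (Real.differentiable_exp.comp (hgf.differentiable (by simp))).differentiableAt
      have h2 : DifferentiableAt ℝ (fun r : Fin 4 → ℝ => ((r 2 : ℝ), (r 3 : ℝ))) q :=
        ((ContinuousLinearMap.proj (R := ℝ) (φ := fun _ : Fin 4 => ℝ) 2).prod
          (ContinuousLinearMap.proj (R := ℝ) (φ := fun _ : Fin 4 => ℝ) 3)).differentiableAt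
      have h3 := h1.comp q h2
      exact h3
  · intro t
    simp [Pi.single_apply]

lemma ginv_row1 (gf : ℝ → ℝ → ℝ) (q : Fin 4 → ℝ) (h1 : 0 < q 1) (d : Fin 4) :
    (gmet gf q)⁻¹ 1 d = (![1,0,0,0] : Fin 4 → ℝ) d := by
  set E : ℝ := (q 1) ^ 2 * Real.exp (gf (q 2) (q 3)) with hE
  have hEne : E ≠ 0 := by positivity
  have hinv : (gmet gf q)⁻¹ =
      !![-(Real.sqrt (q 0 / (q 1) ^ 3)), 1, 0, 0; 1, 0, 0, 0;
         0, 0, E⁻¹, 0; 0, 0, 0, E⁻¹] := by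
    apply Matrix.inv_eq_right_inv
    ext i j
    fin_cases i <;> fin_cases j <;>
      simp [gmet, Matrix.mul_apply, Fin.sum_univ_four, ← hE, hEne,
        Matrix.vecHead, Matrix.vecTail]
  rw [hinv]; fin_cases d <;> simp

lemma llow_fun (gf : ℝ → ℝ → ℝ) (a : Fin 4) :
    llow gf a = fun _ => (![0,1,0,0] : Fin 4 → ℝ) a := by
  funext q; fin_cases a <;> simp [llow, gmet, lvec, Fin.sum_univ_four]

lemma pd_gmet_row0 (gf : ℝ → ℝ → ℝ) (i b : Fin 4) (q : Fin 4 → ℝ) :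
    pd i (fun r => gmet gf r 0 b) q = 0 := by
  fin_cases b
  · exact pd_congr_zero (g := fun _ => (0:ℝ)) (fun r => by simp [gmet]) _ _ (pd_const 0 _ _)
  · exact pd_congr_zero (g := fun _ => (1:ℝ)) (fun r => by simp [gmet]) _ _ (pd_const 1 _ _)
  · exact pd_congr_zero (g := fun _ => (0:ℝ)) (fun r => by simp [gmet]) _ _ (pd_const 0 _ _)
  · exact pd_congr_zero (g := fun _ => (0:ℝ)) (fun r => by simp [gmet]) _ _ (pd_const 0 _ _)

lemma pd0_gmet (gf : ℝ → ℝ → ℝ) (hgf : ContDiff ℝ (⊤ : ℕ∞) (fun p : ℝ × ℝ => gf p.1 p.2))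
    (a b : Fin 4) (ha : a ≠ 1) (q : Fin 4 → ℝ) :
    pd 0 (fun r => gmet gf r a b) q = 0 := by
  fin_cases a <;> fin_cases b <;>
    first
    | (exfalso; exact ha rfl)
    | (refine pd_congr_zero (g := fun _ => (0:ℝ)) ?_ _ _ (pd_const 0 _ _)
       intro r
       simp [gmet, Matrix.vecHead, Matrix.vecTail]
       done)
    | (refine pd_congr_zero (g := fun _ => (1:ℝ)) ?_ _ _ (pd_const 1 _ _)
       intro r
       simp [gmet, Matrix.vecHead, Matrix.vecTail]
       done)
    | (refine pd_congr_zero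
        (g := fun r : Fin 4 → ℝ => (r 1) ^ 2 * Real.exp (gf (r 2) (r 3)))
        ?_ _ _ (pdF_zero gf hgf q)
       intro r
       simp [gmet, Matrix.vecHead, Matrix.vecTail]
       done)


/-- for the metric (10), the vector field `l = ∂/∂u` is null and
recurrent (`l_{a;b} = l_a p_b`) on the domain `u > 0`, `v > 0`. -/
theorem l_null_and_recurrent (gf : ℝ → ℝ → ℝ)
    (hgf : ContDiff ℝ (⊤ : ℕ∞) (fun p : ℝ × ℝ => gf p.1 p.2)) :
    (∀ q : Fin 4 → ℝ, 0 < q 0 → 0 < q 1 →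
      ∑ a, ∑ b, gmet gf q a b * lvec a * lvec b = 0) ∧
    ∃ p1 : Fin 4 → (Fin 4 → ℝ) → ℝ, ∀ (a b : Fin 4) (q : Fin 4 → ℝ),
      0 < q 0 → 0 < q 1 →
      covD1 (gmet gf) (llow gf) a b q = llow gf a q * p1 b q := by
  constructor
  · intro q _ _
    simp [gmet, lvec, Fin.sum_univ_four, Matrix.vecHead, Matrix.vecTail]
  · refine ⟨fun b q => covD1 (gmet gf) (llow gf) 1 b q, ?_⟩
    intro a b q h0 h1
    by_cases ha : a = 1
    · subst ha
      have : llow gf 1 q = 1 := by rw [llow_fun]; simp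
      rw [this, one_mul]
    · have hla : llow gf a q = 0 := by
        rw [llow_fun]; fin_cases a <;> simp_all
      rw [hla, zero_mul]
      have hchr : christoffel (gmet gf) 1 a b q = 0 := by
        unfold christoffel
        rw [Fin.sum_univ_four, ginv_row1 gf q h1 0, ginv_row1 gf q h1 1,
          ginv_row1 gf q h1 2, ginv_row1 gf q h1 3,
          pd_gmet_row0 gf a b q, pd_gmet_row0 gf b a q, pd0_gmet gf hgf a b ha q]
        norm_num [show (![1,0,0,0] : Fin 4 → ℝ) 2 = 0 from rfl,
          show (![1,0,0,0] : Fin 4 → ℝ) 3 = 0 from rfl]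
      unfold covD1
      rw [llow_fun]
      have hpd : pd b (fun _ => (![0,1,0,0] : Fin 4 → ℝ) a) q = 0 := pd_const _ _ _
      rw [hpd, Fin.sum_univ_four, hchr]
      simp [llow_fun]
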